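/- Define, for t > 0, f(t) = (π coth(π/(2t)) − 2t) / (32π t⁴ (cosh(π/t) − 1)). Then lim_{t→0⁺} t⁴ · e^{π/t} · f(t) = 1/16. Equivalently, the heat kernel of the isotropic bi-Heisenberg group (α₁ = α₂ = 1) at the cut point ζ = (0,0,0,0,1), where d(0,ζ)² = 4π, satisfies f(t) = t^{−4} e^{−d²(0,ζ)/(4t)} φ(t) with φ(t) → 1/16 as t → 0⁺. -/

import Mathlib

open Real Filter

/-- The bi-Heisenberg heat kernel (isotropic case `α₁ = α₂ = 1`) at the cut point
`ζ = (0,0,0,0,1)` on the vertical axis, as a function of time `t > 0`. -/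
noncomputable def f (t : ℝ) : ℝ :=
  (Real.pi * (Real.cosh (Real.pi / (2 * t)) / Real.sinh (Real.pi / (2 * t))) - 2 * t) /
    (32 * Real.pi * t ^ 4 * (Real.cosh (Real.pi / t) - 1))

/-!
With `x = π/(2t) → ∞`, `coth x → 1` and `e^{2x} / (cosh 2x - 1) = 2 / (1 - e^{-2x})² → 2`, so
`t⁴ e^{π/t} f(t) = (π coth x - 2t) · e^{2x} / (32 π (cosh 2x - 1)) → π · 2 / (32 π) = 1/16`.
-/

open Topology

namespace Real

theorem cosh_div_sinh_eq (x : ℝ) :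
    cosh x / sinh x = (1 + exp (-(2 * x))) / (1 - exp (-(2 * x))) := by
  have hexp : exp (-(2 * x)) = exp (-x) / exp x := by
    rw [← exp_sub]; ring_nf
  have hcosh : cosh x = exp x / 2 * (1 + exp (-(2 * x))) := by
    rw [cosh_eq, hexp]; field_simp
  have hsinh : sinh x = exp x / 2 * (1 - exp (-(2 * x))) := by
    rw [sinh_eq, hexp]; field_simp
  rw [hcosh, hsinh, mul_div_mul_left _ _ (by positivity)]

theorem tendsto_cosh_div_sinh_atTop : Tendsto (fun x => cosh x / sinh x) atTop (𝓝 1) := by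
  have hq : Tendsto (fun x : ℝ => exp (-(2 * x))) atTop (𝓝 0) :=
    tendsto_exp_neg_atTop_nhds_zero.comp (tendsto_id.const_mul_atTop two_pos)
  simp_rw [cosh_div_sinh_eq]
  have hone := tendsto_const_nhds (x := (1 : ℝ)) (f := (atTop : Filter ℝ))
  convert (hone.add hq).div (hone.sub hq) (by norm_num) using 2 <;> norm_num

theorem exp_div_cosh_sub_one_eq (x : ℝ) : exp x / (cosh x - 1) = 2 / (1 - exp (-x)) ^ 2 := by
  have hcosh : cosh x - 1 = exp x * (1 - exp (-x)) ^ 2 / 2 := by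
    rw [cosh_eq, exp_neg]; field_simp; ring
  rw [hcosh, div_div_eq_mul_div, mul_div_mul_left _ _ (exp_ne_zero x)]

theorem tendsto_exp_div_cosh_sub_one_atTop :
    Tendsto (fun x => exp x / (cosh x - 1)) atTop (𝓝 2) := by
  simp_rw [exp_div_cosh_sub_one_eq]
  have hone := tendsto_const_nhds (x := (1 : ℝ)) (f := (atTop : Filter ℝ))
  convert (tendsto_const_nhds (x := (2 : ℝ))).div
    ((hone.sub tendsto_exp_neg_atTop_nhds_zero).pow 2) (by norm_num) using 2 <;> norm_num

end Real

theorem tendsto_const_div_nhdsGT_zero {𝕜 : Type*} [Semifield 𝕜] [LinearOrder 𝕜]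
    [IsStrictOrderedRing 𝕜] [TopologicalSpace 𝕜] [OrderTopology 𝕜] {c : 𝕜} (hc : 0 < c) :
    Tendsto (fun t => c / t) (𝓝[>] 0) atTop := by
  simpa [div_eq_mul_inv] using tendsto_inv_nhdsGT_zero.const_mul_atTop hc

theorem pow_four_mul_exp_mul_f_eq {t : ℝ} (ht : t ≠ 0) :
    t ^ 4 * exp (π / t) * f t =
      (π * (cosh (π / (2 * t)) / sinh (π / (2 * t))) - 2 * t) *
        (exp (π / t) / (cosh (π / t) - 1)) / (32 * π) := by
  rw [f]
  field_simp

/-- Small-time asymptotics at the cut point in the isotropic case: since `d(0,ζ)² = 4π`,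
one has `f(t) = t⁻⁴ e^{−d²(0,ζ)/(4t)} φ(t)` with `φ(t) = t⁴ e^{π/t} f(t) → 1/16`
as `t → 0⁺`. -/
theorem heat_kernel_asymptotics_isotropic :
    Tendsto (fun t : ℝ => t ^ 4 * Real.exp (Real.pi / t) * f t)
      (nhdsWithin 0 (Set.Ioi 0)) (nhds (1 / 16)) := by
  have hcoth := tendsto_cosh_div_sinh_atTop.comp
    (tendsto_const_div_nhdsGT_zero (by positivity : 0 < π / 2))
  have hexp := tendsto_exp_div_cosh_sub_one_atTop.comp (tendsto_const_div_nhdsGT_zero pi_pos)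
  have htwo : Tendsto (fun t : ℝ => 2 * t) (𝓝[>] 0) (𝓝 (2 * 0)) :=
    (tendsto_nhdsWithin_of_tendsto_nhds tendsto_id).const_mul 2
  have hlim := (((tendsto_const_nhds (x := π)).mul hcoth).sub htwo).mul hexp |>.div_const (32 * π)
  convert hlim.congr' ?_ using 2
  · field_simp; ring
  · filter_upwards [self_mem_nhdsWithin] with t (htpos : 0 < t)
    simp only [Function.comp_apply, div_div, pow_four_mul_exp_mul_f_eq htpos.ne']
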